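/- For λ ∈ ℂ, the map σ_λ: 𝒟ⁿ_λ → Pol_n, sending a differential operator of order ≤ n with smooth coefficients to its projectively equivariant symbol, is a linear bijection (its inverse being a differential operator on symbols). -/

import Mathlib

/-- Generalized binomial coefficient `C(z,k) = z(z-1)⋯(z-k+1)/k!` for `z ∈ ℂ`. -/
noncomputable def gbinom (z : ℂ) (k : ℕ) : ℂ :=
  (∏ i ∈ Finset.range k, (z - i)) / (k.factorial : ℂ)

/-- The constants `α_p^j = C(j,p)·C(2λ-p, j-p)/C(j+p+1, 2p+1)` of the
projectively equivariant symbol map. -/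
noncomputable def alphaCoeff (l : ℂ) (p j : ℕ) : ℂ :=
  (j.choose p : ℂ) * gbinom (2 * l - p) (j - p) / ((j + p + 1).choose (2 * p + 1) : ℂ)

/-- The `ξ^p`-coefficient `ā_p = Σ_{j=p}^n α_p^j a_j^{(j-p)}` of the projectively
equivariant symbol of the operator with coefficients `a_j`, of order `≤ n`. -/
noncomputable def symb (l : ℂ) (n : ℕ) (a : ℕ → ℝ → ℂ) (p : ℕ) (x : ℝ) : ℂ :=
  ∑ j ∈ Finset.Icc p n, alphaCoeff l p j * iteratedDeriv (j - p) (a j) x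

/-- The operator `L_X^λ = X(x)∂ + λ X'(x)` acting on smooth functions. -/
noncomputable def Lop (l : ℂ) (X : ℝ → ℂ) (f : ℝ → ℂ) : ℝ → ℂ :=
  fun x => X x * deriv f x + l * deriv X x * f x

/-- The space `𝒟ⁿ_λ` of differential operators of order `≤ n`, identified with their
tuples of smooth coefficients `(a_0, …, a_n)` (with `a_j = 0` for `j > n`). -/
noncomputable def Dn (n : ℕ) : Submodule ℂ (ℕ → ℝ → ℂ) where
  carrier := {a | (∀ j, ContDiff ℝ (⊤ : ℕ∞) (a j)) ∧ ∀ j, n < j → a j = 0}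
  add_mem' := by
    rintro a b ⟨ha1, ha2⟩ ⟨hb1, hb2⟩
    exact ⟨fun j => (ha1 j).add (hb1 j), fun j hj => by
      show a j + b j = 0; rw [ha2 j hj, hb2 j hj, add_zero]⟩
  zero_mem' := ⟨fun _ => contDiff_const, fun _ _ => rfl⟩
  smul_mem' := by
    rintro c a ⟨ha1, ha2⟩
    exact ⟨fun j => (ha1 j).const_smul c, fun j hj => by
      show c • a j = 0; rw [ha2 j hj, smul_zero]⟩


lemma contDiff_top_deriv {f : ℝ → ℂ} (hf : ContDiff ℝ (⊤ : ℕ∞) f) : ContDiff ℝ (⊤ : ℕ∞) (deriv f) := by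
  have h : ContDiff ℝ (((⊤ : ℕ∞) : WithTop ℕ∞) + 1) f := hf.of_le (by exact_mod_cast le_top)
  exact (contDiff_succ_iff_deriv.mp h).2.2

lemma contDiff_top_iteratedDeriv (m : ℕ) {f : ℝ → ℂ} (hf : ContDiff ℝ (⊤ : ℕ∞) f) :
    ContDiff ℝ (⊤ : ℕ∞) (iteratedDeriv m f) := by
  induction m generalizing f with
  | zero => simpa [iteratedDeriv_zero]
  | succ m ih => rw [iteratedDeriv_succ']; exact ih (contDiff_top_deriv hf)

lemma iteratedDeriv_add' {m : ℕ} {f g : ℝ → ℂ} (hf : ContDiff ℝ (⊤ : ℕ∞) f) (hg : ContDiff ℝ (⊤ : ℕ∞) g)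
    (x : ℝ) : iteratedDeriv m (f + g) x = iteratedDeriv m f x + iteratedDeriv m g x := by
  simp_rw [← iteratedDerivWithin_univ]
  exact iteratedDerivWithin_add (Set.mem_univ x) uniqueDiffOn_univ
    (hf.of_le (by exact_mod_cast le_top)).contDiffWithinAt (hg.of_le (by exact_mod_cast le_top)).contDiffWithinAt

lemma iteratedDeriv_smul' {m : ℕ} (c : ℂ) {f : ℝ → ℂ} (hf : ContDiff ℝ (⊤ : ℕ∞) f) (x : ℝ) :
    iteratedDeriv m (c • f) x = c • iteratedDeriv m f x := by
  simp_rw [← iteratedDerivWithin_univ]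
  exact iteratedDerivWithin_const_smul (Set.mem_univ x) uniqueDiffOn_univ c
    (hf.of_le (by exact_mod_cast le_top)).contDiffWithinAt

lemma iteratedDeriv_zero_fun {m : ℕ} : iteratedDeriv m (0 : ℝ → ℂ) = 0 := by
  induction m with
  | zero => simp [iteratedDeriv_zero]
  | succ m ih => rw [iteratedDeriv_succ, ih]; funext x; show deriv (fun _ => (0:ℂ)) x = 0; simp

lemma alphaCoeff_diag (l : ℂ) (p : ℕ) : alphaCoeff l p p = 1 := by
  simp [alphaCoeff, gbinom, Nat.choose_self, two_mul]

noncomputable def Nfun (l : ℂ) (n : ℕ) (a : ℕ → ℝ → ℂ) : ℕ → ℝ → ℂ :=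
  fun p x => ∑ j ∈ Finset.Ioc p n, alphaCoeff l p j * iteratedDeriv (j - p) (a j) x

lemma Nfun_mem (l : ℂ) (n : ℕ) {a : ℕ → ℝ → ℂ} (ha : a ∈ Dn n) : Nfun l n a ∈ Dn n := by
  constructor
  · intro p
    apply ContDiff.sum
    intro j _
    exact contDiff_const.mul (contDiff_top_iteratedDeriv _ (ha.1 j))
  · intro p hp
    have he : Finset.Ioc p n = ∅ := Finset.Ioc_eq_empty (by omega)
    funext x
    simp [Nfun, he]

noncomputable def Nend (l : ℂ) (n : ℕ) : Module.End ℂ (Dn n) where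
  toFun a := ⟨Nfun l n a.1, Nfun_mem l n a.2⟩
  map_add' a b := by
    apply Subtype.ext
    funext p x
    show Nfun l n (a.1 + b.1) p x = Nfun l n a.1 p x + Nfun l n b.1 p x
    simp only [Nfun]
    rw [← Finset.sum_add_distrib]
    refine Finset.sum_congr rfl fun j _ => ?_
    have h1 : (a.1 + b.1) j = a.1 j + b.1 j := rfl
    rw [h1, iteratedDeriv_add' (a.2.1 j) (b.2.1 j), mul_add]
  map_smul' c a := by
    apply Subtype.ext
    funext p x
    show Nfun l n (c • a.1) p x = c • Nfun l n a.1 p x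
    simp only [Nfun, smul_eq_mul, Finset.mul_sum]
    refine Finset.sum_congr rfl fun j _ => ?_
    have h1 : (c • a.1) j = c • a.1 j := rfl
    rw [h1, iteratedDeriv_smul' c (a.2.1 j)]
    rw [smul_eq_mul]; ring

lemma Nend_pow_zero (l : ℂ) (n : ℕ) : ∀ (k : ℕ) (a : Dn n) (p : ℕ), n + 1 ≤ p + k →
    ((Nend l n ^ k) a : ℕ → ℝ → ℂ) p = 0 := by
  intro k
  induction k with
  | zero =>
    intro a p hp
    simpa using a.2.2 p (by omega)
  | succ k ih =>
    intro a p hp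
    rw [pow_succ']
    show Nfun l n ((Nend l n ^ k) a : ℕ → ℝ → ℂ) p = 0
    funext x
    apply Finset.sum_eq_zero
    intro j hj
    have hj' := (Finset.mem_Ioc.mp hj).1
    rw [ih a j (by omega), iteratedDeriv_zero_fun]
    simp

theorem symbol_map_linear_bijection (l : ℂ) (n : ℕ) :
    ∃ F : Dn n ≃ₗ[ℂ] Dn n, ∀ a : Dn n, ∀ p ≤ n, ∀ x : ℝ,
      (F a : ℕ → ℝ → ℂ) p x = symb l n (a : ℕ → ℝ → ℂ) p x := by
  set N := Nend l n with hNdef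
  have hN : N ^ (n + 1) = 0 := by
    apply LinearMap.ext
    intro a
    apply Subtype.ext
    funext p
    rw [LinearMap.zero_apply]
    show _ = (0 : ℕ → ℝ → ℂ) p
    rw [Nend_pow_zero l n (n + 1) a p (by omega)]
    simp
  have hnil : IsNilpotent N := ⟨n + 1, hN⟩
  have hu : IsUnit (1 + N) := IsNilpotent.isUnit_one_add (R := Module.End ℂ (Dn n)) hnil
  have hb := (Module.End.isUnit_iff _).mp hu
  refine ⟨LinearEquiv.ofBijective _ hb, ?_⟩
  intro a p hp x
  have h1 : ((1 + N) a : ℕ → ℝ → ℂ) p x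
      = (a : ℕ → ℝ → ℂ) p x + Nfun l n (a : ℕ → ℝ → ℂ) p x := rfl
  rw [LinearEquiv.ofBijective_apply, h1]
  rw [symb, Finset.Icc_eq_cons_Ioc hp, Finset.sum_cons]
  rw [Nat.sub_self, iteratedDeriv_zero, alphaCoeff_diag, one_mul]
  rfl
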